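/- Let u = αx + βy + γz with α, β, γ ∈ O_K and ν_D(u) = 1/2 (note τ(u) = -u, so u is a (-1)-symmetric element of value 1/2). Then ν_K(β² - aγ²) = 0 (i.e. β + γx is a unit of the ring of integers of the field K(x)) and there exists an invertible t ∈ D with u = τ(t)·(βy + γz)·t; that is, ⟨u⟩ ≅ ⟨βy + γz⟩ as skew-hermitian forms over (D, τ). -/

import Mathlib

/-! `Nrd u = -(a α² + ϖ N)` with `N = β² - a γ²` has value `1`, while `ν (a α²)` is even; hence
`ν N = 0` and `α ∈ 𝔪_K`. Then `1 + a α² / (ϖ N) ≡ 1` and, for its square root `ρ ≡ 1`, also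
`(1 + ρ) / 2 ≡ 1` have square roots by Newton's iteration in the complete field `K`; write
`σ² = 2 + 2ρ`. For `v = βy + γz`, the pure quaternions `ρv` and `u` have the same norm, hence the
same square, so `s = (ρv)² + ρv·u` satisfies `ρv·s = s·u` and `τ(s) v s = (ρσϖN)² u`;
take `t = s / (ρσϖN)`. -/

noncomputable section

/-- A surjective discrete valuation `ν : K → ℤ` on a field `K`
(the value of `ν` at `0` is irrelevant: only nonzero elements are constrained). -/
structure DVal (K : Type) [Field K] : Type where
  ν : K → ℤ
  ν_mul : ∀ x y : K, x ≠ 0 → y ≠ 0 → ν (x * y) = ν x + ν y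
  ν_add : ∀ x y : K, x ≠ 0 → y ≠ 0 → x + y ≠ 0 → min (ν x) (ν y) ≤ ν (x + y)
  ν_one : ν 1 = 0
  ν_surj : ∀ n : ℤ, ∃ x : K, x ≠ 0 ∧ ν x = n

namespace DVal

variable {K : Type} [Field K]

/-- `x` belongs to the valuation ring `O_K`. -/
def Int (V : DVal K) (x : K) : Prop := x = 0 ∨ 0 ≤ V.ν x

/-- `x` is a unit of the valuation ring `O_K`. -/
def IntUnit (V : DVal K) (x : K) : Prop := x ≠ 0 ∧ V.ν x = 0

/-- `x` belongs to the maximal ideal `m_K` of the valuation ring `O_K`. -/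
def MaxIdeal (V : DVal K) (x : K) : Prop := x = 0 ∨ 1 ≤ V.ν x

/-- `K` is complete with respect to the valuation `ν`: every Cauchy sequence converges. -/
def IsComplete (V : DVal K) : Prop :=
  ∀ f : ℕ → K,
    (∀ M : ℤ, ∃ N : ℕ, ∀ m n : ℕ, N ≤ m → N ≤ n →
      f m - f n = 0 ∨ M ≤ V.ν (f m - f n)) →
    ∃ L : K, ∀ M : ℤ, ∃ N : ℕ, ∀ n : ℕ, N ≤ n →
      f n - L = 0 ∨ M ≤ V.ν (f n - L)

/-- The residue field `k = O_K/m_K` has characteristic different from `2`,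
i.e. `2` is a unit of the valuation ring `O_K`. -/
def ResCharNeTwo (V : DVal K) : Prop := (2 : K) ≠ 0 ∧ V.ν 2 = 0

end DVal

/-- The reduced norm of a quaternion `u = δ + αx + βy + γz ∈ ℍ[K,a,b]`:
`Nrd u = u·τ(u) = δ² - aα² - bβ² + abγ²`. -/
def qnrd {K : Type} [Field K] (a b : K) (u : QuaternionAlgebra K a 0 b) : K :=
  u.re ^ 2 - a * u.imI ^ 2 - b * u.imJ ^ 2 + a * b * u.imK ^ 2

/-- The canonical involution `τ(δ + αx + βy + γz) = δ - αx - βy - γz` of `ℍ[K,a,b]`. -/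
def qtau {K : Type} [Field K] {a b : K} (u : QuaternionAlgebra K a 0 b) :
    QuaternionAlgebra K a 0 b :=
  ⟨u.re, -u.imI, -u.imJ, -u.imK⟩

/-- The norm form `⟨1,-a,-b,ab⟩` of `ℍ[K,a,b]` is anisotropic over `K`
(equivalently, `ℍ[K,a,b]` is a division ring). -/
def QAniso {K : Type} [Field K] (a b : K) : Prop :=
  ∀ d e f g : K, d ^ 2 - a * e ^ 2 - b * f ^ 2 + a * b * g ^ 2 = 0 →
    d = 0 ∧ e = 0 ∧ f = 0 ∧ g = 0

/-- The valuation `ν_D(u) = (1/2)·ν_K(Nrd u)` of the quaternion division algebra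
`D = ℍ[K,a,b]` (at nonzero `u`). -/
def qnu {K : Type} [Field K] (V : DVal K) (a b : K) (u : QuaternionAlgebra K a 0 b) : ℚ :=
  (V.ν (qnrd a b u) : ℚ) / 2

namespace DVal

variable {K : Type} [Field K] (V : DVal K)

/-- `x ∈ 𝔪_K ^ M`; the disjunct `x = 0` absorbs the junk value `ν 0`. -/
def LeVal (M : ℤ) (x : K) : Prop := x = 0 ∨ M ≤ V.ν x

theorem nu_neg_one : V.ν (-1 : K) = 0 := by
  have h := V.ν_mul (-1) (-1) (by norm_num) (by norm_num)
  rw [neg_one_mul, neg_neg, V.ν_one] at h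
  omega

theorem nu_neg {x : K} (hx : x ≠ 0) : V.ν (-x) = V.ν x := by
  rw [← neg_one_mul, V.ν_mul _ _ (by norm_num) hx, V.nu_neg_one, zero_add]

theorem nu_inv {x : K} (hx : x ≠ 0) : V.ν x⁻¹ = -V.ν x := by
  have h := V.ν_mul x x⁻¹ hx (inv_ne_zero hx)
  rw [mul_inv_cancel₀ hx, V.ν_one] at h
  omega

theorem nu_sq {x : K} (hx : x ≠ 0) : V.ν (x ^ 2) = 2 * V.ν x := by
  rw [sq, V.ν_mul x x hx hx]
  ring

theorem nu_add_of_lt {x y : K} (hx : x ≠ 0) (hy : y ≠ 0) (h : V.ν x < V.ν y) :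
    V.ν (x + y) = V.ν x := by
  have hxy : x + y ≠ 0 := by
    intro h0
    rw [eq_neg_of_add_eq_zero_right h0, V.nu_neg hx] at h
    exact lt_irrefl _ h
  have h1 := V.ν_add x y hx hy hxy
  have h2 := V.ν_add (x + y) (-y) hxy (neg_ne_zero.mpr hy) (by rwa [add_neg_cancel_right])
  rw [add_neg_cancel_right, V.nu_neg hy] at h2
  omega

variable {V}

theorem leVal_zero (M : ℤ) : V.LeVal M 0 := Or.inl rfl

theorem LeVal.mono {M M' : ℤ} {x : K} (hx : V.LeVal M x) (h : M' ≤ M) : V.LeVal M' x :=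
  hx.imp_right h.trans

theorem LeVal.neg {M : ℤ} {x : K} (hx : V.LeVal M x) : V.LeVal M (-x) := by
  by_cases h0 : x = 0
  · rw [h0, neg_zero]; exact leVal_zero M
  · exact Or.inr ((V.nu_neg h0).symm ▸ hx.resolve_left h0)

theorem leVal_sub_comm {M : ℤ} {x y : K} : V.LeVal M (x - y) ↔ V.LeVal M (y - x) :=
  ⟨fun h => by simpa only [neg_sub] using h.neg, fun h => by simpa only [neg_sub] using h.neg⟩

theorem LeVal.add {M : ℤ} {x y : K} (hx : V.LeVal M x) (hy : V.LeVal M y) :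
    V.LeVal M (x + y) := by
  by_cases hx0 : x = 0
  · rwa [hx0, zero_add]
  by_cases hy0 : y = 0
  · rwa [hy0, add_zero]
  by_cases hxy : x + y = 0
  · exact Or.inl hxy
  have h := V.ν_add x y hx0 hy0 hxy
  have := hx.resolve_left hx0
  have := hy.resolve_left hy0
  exact Or.inr (by omega)

theorem LeVal.sub {M : ℤ} {x y : K} (hx : V.LeVal M x) (hy : V.LeVal M y) :
    V.LeVal M (x - y) := by
  simpa only [sub_eq_add_neg] using hx.add hy.neg

theorem LeVal.mul {M N : ℤ} {x y : K} (hx : V.LeVal M x) (hy : V.LeVal N y) :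
    V.LeVal (M + N) (x * y) := by
  by_cases hx0 : x = 0
  · rw [hx0, zero_mul]; exact leVal_zero _
  by_cases hy0 : y = 0
  · rw [hy0, mul_zero]; exact leVal_zero _
  have := hx.resolve_left hx0
  have := hy.resolve_left hy0
  exact Or.inr (by rw [V.ν_mul x y hx0 hy0]; omega)

theorem IntUnit.leVal_zero {x : K} (hx : V.IntUnit x) : V.LeVal 0 x := Or.inr hx.2.ge

theorem IntUnit.mul {x y : K} (hx : V.IntUnit x) (hy : V.IntUnit y) : V.IntUnit (x * y) :=
  ⟨mul_ne_zero hx.1 hy.1, by rw [V.ν_mul x y hx.1 hy.1, hx.2, hy.2, add_zero]⟩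

theorem LeVal.div_intUnit {M : ℤ} {x y : K} (hx : V.LeVal M x) (hy : V.IntUnit y) :
    V.LeVal M (x / y) := by
  have hy' : V.LeVal 0 y⁻¹ := Or.inr (by rw [V.nu_inv hy.1, hy.2, neg_zero])
  simpa only [div_eq_mul_inv, add_zero] using hx.mul hy'

theorem intUnit_of_leVal_sub_one {x : K} (hx : V.LeVal 1 (x - 1)) : V.IntUnit x := by
  by_cases h1 : x - 1 = 0
  · rw [sub_eq_zero.mp h1]; exact ⟨one_ne_zero, V.ν_one⟩
  have hlt : V.ν (1 : K) < V.ν (x - 1) := by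
    rw [V.ν_one]; exact Int.lt_of_add_one_le (hx.resolve_left h1)
  have hx0 : x ≠ 0 := by
    rintro rfl
    rw [zero_sub, V.nu_neg_one, V.ν_one] at hlt
    exact lt_irrefl _ hlt
  have h := V.nu_add_of_lt one_ne_zero h1 hlt
  rw [add_sub_cancel, V.ν_one] at h
  exact ⟨hx0, h⟩

theorem eq_zero_of_forall_leVal {x : K} (h : ∀ n : ℕ, V.LeVal n x) : x = 0 := by
  by_contra hx
  have := (h (V.ν x + 1).toNat).resolve_left hx
  have := Int.self_le_toNat (V.ν x + 1)
  omega

theorem exists_limit_of_leVal_succ_sub (hcomp : V.IsComplete) {f : ℕ → K}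
    (hf : ∀ n : ℕ, V.LeVal (n + 1) (f (n + 1) - f n)) :
    ∃ L, ∀ n : ℕ, V.LeVal (n + 1) (L - f n) := by
  have hcauchy : ∀ n m : ℕ, n ≤ m → V.LeVal (n + 1) (f m - f n) := by
    intro n m hnm
    induction m, hnm using Nat.le_induction with
    | base => rw [sub_self]; exact leVal_zero _
    | succ m hnm ih =>
      rw [← sub_add_sub_cancel]
      exact ((hf m).mono (by omega)).add ih
  obtain ⟨L, hL⟩ := hcomp f fun M => ⟨M.toNat, fun m n hm hn => by
    have := Int.self_le_toNat M
    rcases le_total n m with h | h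
    · exact (hcauchy n m h).mono (by omega)
    · exact leVal_sub_comm.1 ((hcauchy m n h).mono (by omega))⟩
  refine ⟨L, fun n => ?_⟩
  obtain ⟨N, hN⟩ := hL (n + 1)
  rw [← sub_add_sub_cancel L (f (max n N))]
  exact leVal_sub_comm.1 (hN _ (le_max_right n N)) |>.add (hcauchy n _ (le_max_left n N))

theorem leVal_newton_step (h2 : V.ResCharNeTwo) {c r : K} {n : ℕ} (hr : V.IntUnit r)
    (hc : V.LeVal (n + 1) (r ^ 2 - c)) :
    V.LeVal (n + 1) ((r + c / r) / 2 - r) ∧ V.LeVal (n + 2) (((r + c / r) / 2) ^ 2 - c) := by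
  have h2r : V.IntUnit (2 * r) := IntUnit.mul h2 hr
  constructor
  · have e : (r + c / r) / 2 - r = -(r ^ 2 - c) / (2 * r) := by
      field_simp [h2.1, hr.1]; ring
    rw [e]
    exact hc.neg.div_intUnit h2r
  · have e : ((r + c / r) / 2) ^ 2 - c = (r ^ 2 - c) * (r ^ 2 - c) / ((2 * r) * (2 * r)) := by
      field_simp [h2.1, hr.1]; ring
    rw [e]
    exact ((hc.mul hc).div_intUnit (h2r.mul h2r)).mono (by omega)

theorem exists_sq_eq_of_leVal_sub_one (hcomp : V.IsComplete) (h2 : V.ResCharNeTwo) {c : K}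
    (hc : V.LeVal 1 (c - 1)) : ∃ r, r ^ 2 = c ∧ V.LeVal 1 (r - 1) := by
  set newton : K → K := fun r => (r + c / r) / 2
  set f : ℕ → K := fun n => newton^[n] 1
  have hf : ∀ n, f (n + 1) = newton (f n) := fun n => Function.iterate_succ_apply' _ _ _
  have hinv : ∀ n : ℕ, V.LeVal 1 (f n - 1) ∧ V.LeVal (n + 1) (f n ^ 2 - c) := by
    intro n
    induction n with
    | zero =>
      refine ⟨by simpa [f] using leVal_zero (V := V) 1, ?_⟩
      simpa [f] using leVal_sub_comm.1 hc
    | succ n ih =>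
      obtain ⟨hstep, hsq⟩ := leVal_newton_step h2 (intUnit_of_leVal_sub_one ih.1) ih.2
      rw [hf, ← sub_add_sub_cancel _ (f n)]
      exact ⟨(hstep.mono (by omega)).add ih.1, by push_cast; exact hsq.mono (by omega)⟩
  have hdiff : ∀ n : ℕ, V.LeVal (n + 1) (f (n + 1) - f n) := fun n => by
    rw [hf]
    exact (leVal_newton_step h2 (intUnit_of_leVal_sub_one (hinv n).1) (hinv n).2).1
  obtain ⟨L, hL⟩ := exists_limit_of_leVal_succ_sub hcomp hdiff
  refine ⟨L, sub_eq_zero.mp (eq_zero_of_forall_leVal (V := V) fun n => ?_), ?_⟩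
  · have hfn : V.LeVal 0 (2 * f n) :=
      IntUnit.leVal_zero h2 |>.mul (intUnit_of_leVal_sub_one (hinv n).1).leVal_zero
    have e : L ^ 2 - c = (L - f n) * ((L - f n) + 2 * f n) + (f n ^ 2 - c) := by ring
    rw [e]
    exact (((hL n).mul (((hL n).mono (by omega)).add hfn)).add (hinv n).2).mono (by omega)
  · rw [← sub_add_sub_cancel L (f 0)]
    exact (hL 0).add (hinv 0).1 |>.mono (by omega)

/-- As `ν (a α²)` is even, `ν (a α² + ϖ N) = 1` forces `ν (ϖ N) = 1 < ν (a α²)`. -/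
theorem intUnit_of_nu_mul_sq_add_mul_eq_one {a ϖ α N : K} (ha : V.IntUnit a) (hϖ0 : ϖ ≠ 0)
    (hvϖ : V.ν ϖ = 1) (hN : V.Int N) (h0 : a * α ^ 2 + ϖ * N ≠ 0)
    (h1 : V.ν (a * α ^ 2 + ϖ * N) = 1) : V.IntUnit N ∧ V.LeVal 1 α := by
  by_cases hα0 : α = 0
  · rw [hα0, zero_pow two_ne_zero, mul_zero, zero_add] at h0 h1
    have hN0 := right_ne_zero_of_mul h0
    rw [V.ν_mul ϖ N hϖ0 hN0, hvϖ] at h1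
    exact ⟨⟨hN0, by omega⟩, Or.inl hα0⟩
  have hX0 : a * α ^ 2 ≠ 0 := mul_ne_zero ha.1 (pow_ne_zero 2 hα0)
  have hνX : V.ν (a * α ^ 2) = 2 * V.ν α := by
    rw [V.ν_mul _ _ ha.1 (pow_ne_zero 2 hα0), ha.2, V.nu_sq hα0, zero_add]
  by_cases hN0 : N = 0
  · rw [hN0, mul_zero, add_zero, hνX] at h1
    omega
  have hY0 : ϖ * N ≠ 0 := mul_ne_zero hϖ0 hN0
  have hνY : V.ν (ϖ * N) = 1 + V.ν N := by rw [V.ν_mul ϖ N hϖ0 hN0, hvϖ]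
  have hνN := hN.resolve_left hN0
  rcases lt_trichotomy (V.ν (a * α ^ 2)) (V.ν (ϖ * N)) with h | h | h
  · rw [V.nu_add_of_lt hX0 hY0 h, hνX] at h1
    omega
  · have := V.ν_add _ _ hX0 hY0 h0
    omega
  · rw [add_comm, V.nu_add_of_lt hY0 hX0 h, hνY] at h1
    exact ⟨⟨hN0, by omega⟩, Or.inr (by omega)⟩

theorem exists_sq_mul_eq_mul_sq_add (hcomp : V.IsComplete) (h2 : V.ResCharNeTwo) {a ϖ α N : K}
    (ha : V.IntUnit a) (hϖ0 : ϖ ≠ 0) (hvϖ : V.ν ϖ = 1) (hN : V.IntUnit N) (hα : V.LeVal 1 α) :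
    ∃ ρ, ρ ^ 2 * (ϖ * N) = a * α ^ 2 + ϖ * N ∧ V.LeVal 1 (ρ - 1) := by
  have hY0 : ϖ * N ≠ 0 := mul_ne_zero hϖ0 hN.1
  have hN0 := hN.1
  have hc : V.LeVal 1 ((a * α ^ 2 + ϖ * N) / (ϖ * N) - 1) := by
    have e : (a * α ^ 2 + ϖ * N) / (ϖ * N) - 1 = (α * α) * (a / (ϖ * N)) := by
      field_simp; ring
    have hq : V.LeVal (-1) (a / (ϖ * N)) := Or.inr <| by
      rw [div_eq_mul_inv, V.ν_mul _ _ ha.1 (inv_ne_zero hY0), V.nu_inv hY0,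
        V.ν_mul ϖ N hϖ0 hN.1, ha.2, hvϖ, hN.2]
      norm_num
    rw [e]
    exact (hα.mul hα).mul hq
  obtain ⟨ρ, hρ, hρ1⟩ := exists_sq_eq_of_leVal_sub_one hcomp h2 hc
  exact ⟨ρ, by rw [hρ]; field_simp, hρ1⟩

theorem exists_sq_eq_two_add_two_mul (hcomp : V.IsComplete) (h2 : V.ResCharNeTwo) {ρ : K}
    (hρ : V.LeVal 1 (ρ - 1)) : ∃ σ, σ ^ 2 = 2 + 2 * ρ ∧ σ ≠ 0 := by
  have hc : V.LeVal 1 ((1 + ρ) / 2 - 1) := by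
    have e : (1 + ρ) / 2 - 1 = (ρ - 1) / 2 := by field_simp [h2.1]; ring
    rw [e]
    exact hρ.div_intUnit h2
  obtain ⟨σ, hσ, hσ1⟩ := exists_sq_eq_of_leVal_sub_one hcomp h2 hc
  refine ⟨2 * σ, ?_, mul_ne_zero h2.1 (intUnit_of_leVal_sub_one hσ1).1⟩
  rw [mul_pow, hσ]
  field_simp [h2.1]

end DVal

section Quaternion

variable {K : Type} [Field K] {a b : K}

open QuaternionAlgebra

theorem qtau_eq_star (u : QuaternionAlgebra K a 0 b) : qtau u = star u := by
  ext <;> simp [qtau]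

theorem star_mul_self_eq_qnrd (u : QuaternionAlgebra K a 0 b) : star u * u = ↑(qnrd a b u) := by
  ext <;>
    simp only [qnrd, re_mul, imI_mul, imJ_mul, imK_mul, re_star, imI_star, imJ_star, imK_star,
      re_coe, imI_coe, imJ_coe, imK_coe] <;>
    ring

theorem self_mul_star_eq_qnrd (u : QuaternionAlgebra K a 0 b) : u * star u = ↑(qnrd a b u) := by
  ext <;>
    simp only [qnrd, re_mul, imI_mul, imJ_mul, imK_mul, re_star, imI_star, imJ_star, imK_star,
      re_coe, imI_coe, imJ_coe, imK_coe] <;>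
    ring

theorem qnrd_mul (u v : QuaternionAlgebra K a 0 b) :
    qnrd a b (u * v) = qnrd a b u * qnrd a b v := by
  simp only [qnrd, re_mul, imI_mul, imJ_mul, imK_mul]
  ring

theorem qnrd_smul (r : K) (u : QuaternionAlgebra K a 0 b) :
    qnrd a b (r • u) = r ^ 2 * qnrd a b u := by
  simp only [qnrd, re_smul, imI_smul, imJ_smul, imK_smul, smul_eq_mul]
  ring

theorem isUnit_of_qnrd_ne_zero {u : QuaternionAlgebra K a 0 b} (h : qnrd a b u ≠ 0) : IsUnit u :=
  ⟨⟨u, (qnrd a b u)⁻¹ • star u,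
    by rw [mul_smul_comm, self_mul_star_eq_qnrd, smul_coe, inv_mul_cancel₀ h, coe_one],
    by rw [smul_mul_assoc, star_mul_self_eq_qnrd, smul_coe, inv_mul_cancel₀ h, coe_one]⟩, rfl⟩

theorem mul_self_eq_neg_qnrd {u : QuaternionAlgebra K a 0 b} (hu : u.re = 0) :
    u * u = ↑(-qnrd a b u) := by
  ext <;>
    simp only [qnrd, hu, re_mul, imI_mul, imJ_mul, imK_mul, re_coe, imI_coe, imJ_coe, imK_coe] <;>
    ring

/-- Pure quaternions of equal norm are conjugate: `s = v² + v u` satisfies `v s = s u`. -/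
theorem star_mul_mul_eq_qnrd_smul {u v : QuaternionAlgebra K a 0 b} (hu : u.re = 0)
    (hv : v.re = 0) (h : qnrd a b v = qnrd a b u) :
    star (v * v + v * u) * v * (v * v + v * u) = qnrd a b (v * v + v * u) • u := by
  have hsq : u * u = v * v := by rw [mul_self_eq_neg_qnrd hu, mul_self_eq_neg_qnrd hv, h]
  have hcomm : v * (v * v + v * u) = (v * v + v * u) * u := by
    simp only [mul_add, add_mul, mul_assoc, hsq]
    abel
  rw [mul_assoc, hcomm, ← mul_assoc, star_mul_self_eq_qnrd, coe_mul_eq_smul]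

theorem exists_isUnit_qtau_mul_mul_eq {α β γ ρ σ : K}
    (hρ : ρ ^ 2 * (b * (β ^ 2 - a * γ ^ 2)) = a * α ^ 2 + b * (β ^ 2 - a * γ ^ 2))
    (hσ : σ ^ 2 = 2 + 2 * ρ) (h0 : ρ * σ * (b * (β ^ 2 - a * γ ^ 2)) ≠ 0) :
    ∃ t : QuaternionAlgebra K a 0 b, IsUnit t ∧
      (⟨0, α, β, γ⟩ : QuaternionAlgebra K a 0 b) = qtau t * ⟨0, 0, β, γ⟩ * t := by
  set u : QuaternionAlgebra K a 0 b := ⟨0, α, β, γ⟩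
  set v : QuaternionAlgebra K a 0 b := ⟨0, 0, β, γ⟩
  set c := ρ * σ * (b * (β ^ 2 - a * γ ^ 2))
  have hρ0 : ρ ≠ 0 := left_ne_zero_of_mul (left_ne_zero_of_mul h0)
  have hv : qnrd a b (ρ • v) = qnrd a b u := by
    simp only [qnrd, re_smul, imI_smul, imJ_smul, imK_smul, smul_eq_mul, u, v]
    linear_combination -hρ
  set s := ρ • v * ρ • v + ρ • v * u
  have hs : qnrd a b s = ρ * c ^ 2 := by
    rw [show s = ρ • v * (ρ • v + u) by rw [mul_add], qnrd_mul]
    simp only [qnrd, re_smul, imI_smul, imJ_smul, imK_smul, re_add, imI_add, imJ_add,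
      imK_add, smul_eq_mul, u, v, c]
    linear_combination (-ρ ^ 2 * (b * (β ^ 2 - a * γ ^ 2))) * hρ
      - ρ ^ 3 * (b * (β ^ 2 - a * γ ^ 2)) ^ 2 * hσ
  have hconj : star s * v * s = c ^ 2 • u := by
    have h := star_mul_mul_eq_qnrd_smul (u := u) (v := ρ • v) rfl (by simp [v]) hv
    rwa [hs, mul_smul_comm, smul_mul_assoc, mul_smul, smul_right_inj hρ0] at h
  have ht : qnrd a b (c⁻¹ • s) = ρ := by
    rw [qnrd_smul, hs]
    field_simp
  refine ⟨c⁻¹ • s, isUnit_of_qnrd_ne_zero (ht ▸ hρ0), ?_⟩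
  rw [qtau_eq_star, star_smul', smul_mul_assoc, mul_smul_comm, smul_mul_assoc, hconj,
    smul_smul, smul_smul, ← sq, ← mul_pow, inv_mul_cancel₀ h0, one_pow, one_smul]

end Quaternion

theorem stmt_8_general (K : Type) [Field K] (V : DVal K)
    -- K is complete with residue field of characteristic ≠ 2
    (hcomp : V.IsComplete) (hchar : V.ResCharNeTwo)
    -- D = ℍ[K,a,ϖ] with a ∈ O_K^×, ϖ a uniformizer, D a division ring
    (a ϖ : K) (ha0 : a ≠ 0) (hva : V.ν a = 0) (hϖ0 : ϖ ≠ 0) (hvϖ : V.ν ϖ = 1)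
    (haniso : QAniso a ϖ)
    -- u = αx + βy + γz with coordinates in O_K and ν_D(u) = 1/2
    (α β γ : K) (hβ : V.Int β) (hγ : V.Int γ)
    (hu0 : (⟨0, α, β, γ⟩ : QuaternionAlgebra K a 0 ϖ) ≠ 0)
    (hval : qnu V a ϖ (⟨0, α, β, γ⟩ : QuaternionAlgebra K a 0 ϖ) = 1 / 2) :
    V.IntUnit (β ^ 2 - a * γ ^ 2) ∧ ∃ t : QuaternionAlgebra K a 0 ϖ, IsUnit t ∧
      (⟨0, α, β, γ⟩ : QuaternionAlgebra K a 0 ϖ) =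
        qtau t * (⟨0, 0, β, γ⟩ : QuaternionAlgebra K a 0 ϖ) * t := by
  have hnrd : qnrd a ϖ (⟨0, α, β, γ⟩ : QuaternionAlgebra K a 0 ϖ) =
      -(a * α ^ 2 + ϖ * (β ^ 2 - a * γ ^ 2)) := by
    simp only [qnrd]; ring
  have h0 : a * α ^ 2 + ϖ * (β ^ 2 - a * γ ^ 2) ≠ 0 := fun h => hu0 <| by
    obtain ⟨-, rfl, rfl, rfl⟩ := haniso 0 α β γ (by linear_combination -h)
    rfl
  have h1 : V.ν (a * α ^ 2 + ϖ * (β ^ 2 - a * γ ^ 2)) = 1 := by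
    rw [qnu, hnrd, V.nu_neg h0] at hval
    exact_mod_cast (by linarith : (V.ν (a * α ^ 2 + ϖ * (β ^ 2 - a * γ ^ 2)) : ℚ) = 1)
  have hN : V.Int (β ^ 2 - a * γ ^ 2) := by
    have ha : V.LeVal 0 a := Or.inr hva.ge
    have h := (DVal.LeVal.mul hβ hβ).sub (ha.mul (DVal.LeVal.mul hγ hγ))
    simp only [add_zero, ← sq] at h
    exact h
  obtain ⟨hNunit, hαm⟩ :=
    V.intUnit_of_nu_mul_sq_add_mul_eq_one ⟨ha0, hva⟩ hϖ0 hvϖ hN h0 h1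
  refine ⟨hNunit, ?_⟩
  obtain ⟨ρ, hρ, hρ1⟩ :=
    V.exists_sq_mul_eq_mul_sq_add hcomp hchar ⟨ha0, hva⟩ hϖ0 hvϖ hNunit hαm
  obtain ⟨σ, hσ, hσ0⟩ := V.exists_sq_eq_two_add_two_mul hcomp hchar hρ1
  exact exists_isUnit_qtau_mul_mul_eq hρ hσ <|
    mul_ne_zero (mul_ne_zero (V.intUnit_of_leVal_sub_one hρ1).1 hσ0) (mul_ne_zero hϖ0 hNunit.1)

/-- if `u = αx + βy + γz` is `(-1)`-symmetric of value `1/2` then `β + γx` is a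
unit of the ring of integers of `K(x)` (i.e. `ν_K(β² - aγ²) = 0`) and `⟨u⟩ ≅ ⟨βy + γz⟩`
over `(D, τ)`. -/
theorem stmt_8 (K : Type) [Field K] (V : DVal K)
    -- K is complete with residue field of characteristic ≠ 2
    (hcomp : V.IsComplete) (hchar : V.ResCharNeTwo)
    -- D = ℍ[K,a,ϖ] with a ∈ O_K^×, ϖ a uniformizer, D a division ring
    (a ϖ : K) (ha0 : a ≠ 0) (hva : V.ν a = 0) (hϖ0 : ϖ ≠ 0) (hvϖ : V.ν ϖ = 1)
    (haniso : QAniso a ϖ)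
    -- u = αx + βy + γz with coordinates in O_K and ν_D(u) = 1/2
    (α β γ : K) (hα : V.Int α) (hβ : V.Int β) (hγ : V.Int γ)
    (hu0 : (⟨0, α, β, γ⟩ : QuaternionAlgebra K a 0 ϖ) ≠ 0)
    (hval : qnu V a ϖ (⟨0, α, β, γ⟩ : QuaternionAlgebra K a 0 ϖ) = 1 / 2) :
    V.IntUnit (β ^ 2 - a * γ ^ 2) ∧ ∃ t : QuaternionAlgebra K a 0 ϖ, IsUnit t ∧
      (⟨0, α, β, γ⟩ : QuaternionAlgebra K a 0 ϖ) =
        qtau t * (⟨0, 0, β, γ⟩ : QuaternionAlgebra K a 0 ϖ) * t :=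
  stmt_8_general K V hcomp hchar a ϖ ha0 hva hϖ0 hvϖ haniso α β γ hβ hγ hu0 hval
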